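/- Let G(p) be a framework on n nodes in general position in ℝ^r, r ≤ n−2, admitting a positive semidefinite stress matrix S of rank n−r−1. Then G(p) is universally rigid: every framework G(q) in any Euclidean space ℝ^s satisfying ‖q^i − q^j‖ = ‖p^i − p^j‖ for all edges (i,j) of G also satisfies ‖q^i − q^j‖ = ‖p^i − p^j‖ for all pairs i,j. -/

import Mathlib

open Matrix

/-- The (r+1)×n matrix whose j-th column is (p^j, 1). -/
def calA {n r : ℕ} (p : Fin n → EuclideanSpace ℝ (Fin r)) :
    Matrix (Fin (r + 1)) (Fin n) ℝ :=
  fun i j => if h : (i : ℕ) < r then p j ⟨i, h⟩ else 1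

/-- No subset of the points of cardinality r+1 is affinely dependent. -/
def InGeneralPosition {n r : ℕ} (p : Fin n → EuclideanSpace ℝ (Fin r)) : Prop :=
  ∀ s : Finset (Fin n), s.card = r + 1 →
    AffineIndependent ℝ (fun i : {x // x ∈ s} => p i)

/-- `S` is a stress matrix of the framework `G(p)`. -/
def IsStressMatrix {n r : ℕ} (G : SimpleGraph (Fin n))
    (p : Fin n → EuclideanSpace ℝ (Fin r)) (S : Matrix (Fin n) (Fin n) ℝ) : Prop :=
  S.IsSymm ∧ (∀ i j, i ≠ j → ¬ G.Adj i j → S i j = 0) ∧ calA p * S = 0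

/-! Write `uʲ = (pʲ, 1)` for the columns of `calA p`. The vectors `(f uʲ)ⱼ`, `f` linear, lie in
`ker S` by the stress condition and exhaust it by the rank condition. If `q` has the edge lengths of `p`, the energies
`∑ Sᵢⱼ ‖qⁱ - qʲ‖²` and `∑ Sᵢⱼ ‖pⁱ - pʲ‖²` agree; the second is `-2 ∑ Sᵢⱼ ⟪pⁱ, pʲ⟫ = 0`, so
positive semidefiniteness puts every coordinate of `q` in `ker S`, i.e. `qʲ = L uʲ` for a linear
`L`. The symmetric form `B` with `B x x = ‖L x‖² - ‖(x₀, …, x_{r-1})‖²` vanishes at `uⁱ - uʲ`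
whenever `Sᵢⱼ ≠ 0`, which puts its diagonal `(B uʲ uʲ)ⱼ` in `ker S`, say equal to `(d uʲ)ⱼ`.
General position forces every row of `S` to have at least `r + 1` nonzero entries, so
`2 B uⁱ = B uⁱ uⁱ • w + d` with `w` the last coordinate; as `w (uⁱ - uʲ) = 0`, `B` vanishes at
every `uⁱ - uʲ`. -/

open Module

def InLinearGeneralPosition (K : Type*) {ι V : Type*} [Field K] [AddCommGroup V] [Module K V]
    (u : ι → V) : Prop :=
  ∀ t : Finset ι, t.card = finrank K V → LinearIndependent K (fun j : t => u j)

namespace LinearMap.BilinForm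

variable {K V ι : Type*} [Field K] [AddCommGroup V] [Module K V] [Fintype ι]
  {B : LinearMap.BilinForm K V} {u : ι → V} {S : Matrix ι ι K}

theorem IsSymm.apply_sub_sub (hB : B.IsSymm) (a b : V) :
    B (a - b) (a - b) = B a a + B b b - 2 * B a b := by
  simp only [map_sub, LinearMap.sub_apply]
  rw [hB.eq b a]
  ring

theorem mulVec_apply_self_eq_zero (hB : B.IsSymm) (hSu : ∀ i, ∑ j, S i j • u j = 0)
    {w : Dual K V} (hw : ∀ j, w (u j) = 1)
    (hBS : ∀ i j, S i j ≠ 0 → B (u i - u j) (u i - u j) = 0) :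
    S *ᵥ (fun i => B (u i) (u i)) = 0 := by
  ext i
  have hrow : ∑ j, S i j = 0 := by simpa [map_sum, hw] using congrArg w (hSu i)
  have hcross : ∑ j, S i j * B (u i) (u j) = 0 := by
    simpa [map_sum] using congrArg (B (u i)) (hSu i)
  have hterm : ∀ j, S i j * (B (u i) (u i) + B (u j) (u j) - 2 * B (u i) (u j)) = 0 := by
    intro j
    by_cases hij : S i j = 0
    · rw [hij, zero_mul]
    · rw [← hB.apply_sub_sub, hBS i j hij, mul_zero]
  have hsum := Finset.sum_eq_zero fun j (_ : j ∈ Finset.univ) => hterm j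
  simp only [mul_sub, mul_add, Finset.sum_sub_distrib, Finset.sum_add_distrib,
    ← Finset.sum_mul, hrow, zero_mul, zero_add, mul_left_comm (S i _) 2, ← Finset.mul_sum,
    hcross, mul_zero, sub_zero] at hsum
  simpa only [Matrix.mulVec, dotProduct, Pi.zero_apply] using hsum

end LinearMap.BilinForm

namespace InLinearGeneralPosition

variable {K V ι : Type*} [Field K] [AddCommGroup V] [Module K V] [FiniteDimensional K V]
  {u : ι → V}

theorem eq_zero_of_le_card {W : Type*} [AddCommGroup W] [Module K W]
    (hu : InLinearGeneralPosition K u) {s : Finset ι} (hs : finrank K V ≤ s.card)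
    {f : V →ₗ[K] W} (hf : ∀ j ∈ s, f (u j) = 0) : f = 0 := by
  obtain ⟨t, hts, ht⟩ := Finset.exists_subset_card_eq hs
  have hspan := (hu t ht).span_eq_top_of_card_eq_finrank' (by simpa using ht)
  exact LinearMap.ext_on_range hspan fun j => by simpa using hf j (hts j.2)

variable [Fintype ι] {S : Matrix ι ι K}

theorem exists_dual_of_mulVec_eq_zero (hu : InLinearGeneralPosition K u)
    (hcard : finrank K V ≤ Fintype.card ι) (hSu : ∀ i, ∑ j, S i j • u j = 0)
    (hrank : S.rank = Fintype.card ι - finrank K V) (y : ι → K) (hy : S *ᵥ y = 0) :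
    ∃ f : Dual K V, ∀ j, y j = f (u j) := by
  let Φ : Dual K V →ₗ[K] ι → K := LinearMap.pi fun j => Dual.eval K V (u j)
  have hΦS : LinearMap.range Φ ≤ LinearMap.ker S.mulVecLin := by
    rintro _ ⟨f, rfl⟩
    ext i
    simpa [Φ, Matrix.mulVec, dotProduct, map_sum] using congrArg f (hSu i)
  have hΦ : Function.Injective Φ := by
    rw [← LinearMap.ker_eq_bot, LinearMap.ker_eq_bot']
    exact fun f hf => hu.eq_zero_of_le_card (s := Finset.univ) hcard
      fun j _ => congrFun hf j
  have hker : finrank K (LinearMap.ker S.mulVecLin) = finrank K V := by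
    have := LinearMap.finrank_range_add_finrank_ker S.mulVecLin
    rw [← Matrix.rank, hrank, finrank_fintype_fun_eq_card] at this
    omega
  have hrange : LinearMap.range Φ = LinearMap.ker S.mulVecLin :=
    Submodule.eq_of_le_of_finrank_le hΦS <| by
      rw [LinearMap.finrank_range_of_inj hΦ, Subspace.dual_finrank_eq, hker]
  obtain ⟨f, hf⟩ : y ∈ LinearMap.range Φ := hrange ▸ hy
  exact ⟨f, fun j => (congrFun hf j).symm⟩

theorem exists_row_support (hu : InLinearGeneralPosition K u)
    (hcard : finrank K V < Fintype.card ι) (hS : S.IsSymm) (hSu : ∀ i, ∑ j, S i j • u j = 0)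
    (hker : ∀ y, S *ᵥ y = 0 → ∃ f : Dual K V, ∀ j, y j = f (u j)) (i : ι) :
    ∃ t : Finset ι, finrank K V ≤ t.card ∧ ∀ j ∈ t, S i j ≠ 0 := by
  classical
  set T := Finset.univ.filter fun j => S i j ≠ 0
  rcases le_or_gt (finrank K V) T.card with hT | hT
  · exact ⟨T, hT, by simp [T]⟩
  exfalso
  obtain ⟨t, hTt, -, ht⟩ := Finset.exists_subsuperset_card_eq (Finset.subset_univ T) hT.le
    (by simpa using hcard.le)
  have hout : ∀ j ∉ t, S i j = 0 := fun j hj => by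
    simpa [T] using fun h => hj (hTt h)
  have hin : ∀ j ∈ t, S i j = 0 := by
    have hsum : ∑ j : t, S i j • u j = 0 := by
      rw [Finset.sum_coe_sort t fun j => S i j • u j, ← hSu i]
      exact Finset.sum_subset (Finset.subset_univ t) fun j _ hj => by rw [hout j hj, zero_smul]
    exact fun j hj => Fintype.linearIndependent_iff.mp (hu t ht) _ hsum ⟨j, hj⟩
  have hrow : S *ᵥ Pi.single i 1 = 0 := by
    ext k
    by_cases hk : k ∈ t
    · simp [hS.apply, hin k hk]
    · simp [hS.apply, hout k hk]
  obtain ⟨f, hf⟩ := hker _ hrow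
  have hf0 : f = 0 := hu.eq_zero_of_le_card (s := Finset.univ.erase i)
    (by rw [Finset.card_erase_of_mem (Finset.mem_univ i), Finset.card_univ]; omega)
    fun j hj => by rw [← hf j, Pi.single_eq_of_ne (Finset.ne_of_mem_erase hj)]
  simpa [hf0] using hf i

theorem bilinForm_apply_sub_eq_zero [NeZero (2 : K)] {B : LinearMap.BilinForm K V}
    (hu : InLinearGeneralPosition K u) (hB : B.IsSymm) (hSu : ∀ i, ∑ j, S i j • u j = 0)
    (hker : ∀ y, S *ᵥ y = 0 → ∃ f : Dual K V, ∀ j, y j = f (u j))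
    (hsupp : ∀ i, ∃ t : Finset ι, finrank K V ≤ t.card ∧ ∀ j ∈ t, S i j ≠ 0)
    {w : Dual K V} (hw : ∀ j, w (u j) = 1)
    (hBS : ∀ i j, S i j ≠ 0 → B (u i - u j) (u i - u j) = 0) (i j : ι) :
    B (u i - u j) (u i - u j) = 0 := by
  obtain ⟨d, hd⟩ := hker _ (LinearMap.BilinForm.mulVec_apply_self_eq_zero hB hSu hw hBS)
  -- Where `S i j ≠ 0`, `2 * B (u i) (u j) = B (u i) (u i) + B (u j) (u j)`, so both sides
  -- agree on these `u j`, which span `V`.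
  have hrow : ∀ i, (2 : K) • B (u i) = B (u i) (u i) • w + d := by
    intro i
    obtain ⟨t, ht, hSt⟩ := hsupp i
    refine sub_eq_zero.mp (hu.eq_zero_of_le_card ht fun j hj => ?_)
    have hij := hB.apply_sub_sub (u i) (u j)
    rw [hBS i j (hSt j hj)] at hij
    simp only [LinearMap.sub_apply, LinearMap.smul_apply, LinearMap.add_apply, hw, ← hd j,
      smul_eq_mul, mul_one]
    linear_combination hij
  have hw0 : w (u i - u j) = 0 := by simp [hw]
  have h := congr(($(hrow i) - $(hrow j)) (u i - u j))
  simp only [LinearMap.sub_apply, LinearMap.smul_apply, LinearMap.add_apply, hw0,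
    smul_eq_mul] at h
  have h2 : (2 : K) * B (u i - u j) (u i - u j) = 0 := by
    rw [LinearMap.map_sub₂]
    linear_combination h
  exact (mul_eq_zero.mp h2).resolve_left two_ne_zero

end InLinearGeneralPosition

section Energy

open scoped RealInnerProductSpace

variable {ι E : Type*} [Fintype ι] [NormedAddCommGroup E] [InnerProductSpace ℝ E]
  {S : Matrix ι ι ℝ}

theorem Matrix.IsSymm.sum_mul_norm_sub_sq (hS : S.IsSymm) (h0 : ∀ i, ∑ j, S i j = 0)
    (x : ι → E) :
    ∑ i, ∑ j, S i j * ‖x i - x j‖ ^ 2 = -2 * ∑ i, ∑ j, S i j * ⟪x i, x j⟫ := by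
  have hleft : ∑ i, ∑ j, S i j * ‖x i‖ ^ 2 = 0 := by
    simp [← Finset.sum_mul, h0]
  have hright : ∑ i, ∑ j, S i j * ‖x j‖ ^ 2 = 0 := by
    rw [Finset.sum_comm]
    simp [← Finset.sum_mul, hS.apply, h0]
  have hexpand : ∀ i j, S i j * ‖x i - x j‖ ^ 2
      = S i j * ‖x i‖ ^ 2 - 2 * (S i j * ⟪x i, x j⟫) + S i j * ‖x j‖ ^ 2 := fun i j => by
    rw [norm_sub_sq_real]
    ring
  simp only [hexpand, Finset.sum_add_distrib, Finset.sum_sub_distrib, ← Finset.mul_sum, hleft,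
    hright]
  ring

theorem sum_mul_inner_eq_zero_of_equilibrium {x : ι → E} (hx : ∀ i, ∑ j, S i j • x j = 0) :
    ∑ i, ∑ j, S i j * ⟪x i, x j⟫ = 0 :=
  Finset.sum_eq_zero fun i _ => by
    simpa [inner_sum, real_inner_smul_right] using congrArg (⟪x i, ·⟫) (hx i)

theorem Matrix.PosSemidef.mulVec_coord_eq_zero {κ : Type*} [Fintype κ] (hS : S.PosSemidef)
    {x : ι → EuclideanSpace ℝ κ} (hx : ∑ i, ∑ j, S i j * ⟪x i, x j⟫ = 0) (k : κ) :
    S *ᵥ (fun j => x j k) = 0 := by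
  have hcoord : ∑ i, ∑ j, S i j * ⟪x i, x j⟫ = ∑ k, (fun j => x j k) ⬝ᵥ S *ᵥ (fun j => x j k) := by
    simp only [PiLp.inner_apply, Real.inner_apply, dotProduct, Matrix.mulVec, Finset.mul_sum]
    conv_rhs => rw [Finset.sum_comm]; arg 2; ext i; rw [Finset.sum_comm]
    exact Finset.sum_congr rfl fun i _ => Finset.sum_congr rfl fun j _ =>
      Finset.sum_congr rfl fun k _ => by ring
  have hnonneg : ∀ k, 0 ≤ (fun j => x j k) ⬝ᵥ S *ᵥ (fun j => x j k) := fun k => by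
    simpa using hS.dotProduct_mulVec_nonneg (fun j => x j k)
  rw [hcoord] at hx
  have := (Finset.sum_eq_zero_iff_of_nonneg fun k _ => hnonneg k).mp hx k (Finset.mem_univ k)
  exact (hS.dotProduct_mulVec_zero_iff _).mp (by simpa using this)

theorem Matrix.PosSemidef.mulVec_coord_eq_zero_of_norm_sub_eq {κ : Type*} [Fintype κ]
    (hS : S.PosSemidef) (h0 : ∀ i, ∑ j, S i j = 0) {p : ι → E}
    (hp : ∀ i, ∑ j, S i j • p j = 0) {q : ι → EuclideanSpace ℝ κ}
    (hpq : ∀ i j, S i j ≠ 0 → ‖q i - q j‖ = ‖p i - p j‖) (k : κ) :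
    S *ᵥ (fun j => q j k) = 0 := by
  have hsymm : S.IsSymm := Matrix.isHermitian_iff_isSymm.mp hS.isHermitian
  have hnorm : ∑ i, ∑ j, S i j * ‖q i - q j‖ ^ 2 = ∑ i, ∑ j, S i j * ‖p i - p j‖ ^ 2 :=
    Finset.sum_congr rfl fun i _ => Finset.sum_congr rfl fun j _ => by
      by_cases hij : S i j = 0
      · simp [hij]
      · rw [hpq i j hij]
  rw [hsymm.sum_mul_norm_sub_sq h0, hsymm.sum_mul_norm_sub_sq h0,
    sum_mul_inner_eq_zero_of_equilibrium hp] at hnorm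
  exact hS.mulVec_coord_eq_zero (by linarith) k

theorem exists_linearMap_of_mulVec_coord_eq_zero {V κ : Type*} [AddCommGroup V] [Module ℝ V]
    {u : ι → V} (hker : ∀ y, S *ᵥ y = 0 → ∃ f : Dual ℝ V, ∀ j, y j = f (u j))
    {x : ι → EuclideanSpace ℝ κ} (hx : ∀ k, S *ᵥ (fun j => x j k) = 0) :
    ∃ L : V →ₗ[ℝ] EuclideanSpace ℝ κ, ∀ j, L (u j) = x j := by
  choose f hf using fun k => hker _ (hx k)
  exact ⟨(WithLp.linearEquiv 2 ℝ (κ → ℝ)).symm.toLinearMap ∘ₗ LinearMap.pi f,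
    fun j => by ext k; simp [hf]⟩

theorem exists_isSymm_bilinForm_apply_self {V F : Type*} [AddCommGroup V] [Module ℝ V]
    [NormedAddCommGroup F] [InnerProductSpace ℝ F] (L : V →ₗ[ℝ] E) (M : V →ₗ[ℝ] F) :
    ∃ B : LinearMap.BilinForm ℝ V, B.IsSymm ∧ ∀ x, B x x = ‖L x‖ ^ 2 - ‖M x‖ ^ 2 :=
  ⟨(innerₗ E).compl₁₂ L L - (innerₗ F).compl₁₂ M M, ⟨fun x y => by simp [real_inner_comm]⟩,
    fun x => by simp⟩

end Energy

section Framework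

variable {n r : ℕ} {p : Fin n → EuclideanSpace ℝ (Fin r)}

@[simp]
theorem calA_last (p : Fin n → EuclideanSpace ℝ (Fin r)) (j : Fin n) :
    calA p (Fin.last r) j = 1 := by
  simp [calA]

@[simp]
theorem calA_castSucc (p : Fin n → EuclideanSpace ℝ (Fin r)) (m : Fin r) (j : Fin n) :
    calA p m.castSucc j = p j m := by
  simp [calA]

def dropLastₗ (r : ℕ) : (Fin (r + 1) → ℝ) →ₗ[ℝ] EuclideanSpace ℝ (Fin r) :=
  (WithLp.linearEquiv 2 ℝ (Fin r → ℝ)).symm.toLinearMap ∘ₗ LinearMap.funLeft ℝ ℝ Fin.castSucc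

theorem dropLastₗ_calA_col (p : Fin n → EuclideanSpace ℝ (Fin r)) (j : Fin n) :
    dropLastₗ r ((calA p).col j) = p j := by
  ext m
  simp [dropLastₗ, LinearMap.funLeft]

theorem InGeneralPosition.inLinearGeneralPosition (hgen : InGeneralPosition p) :
    InLinearGeneralPosition ℝ (calA p).col := by
  intro t ht
  rw [finrank_fin_fun] at ht
  rw [Fintype.linearIndependent_iff]
  intro g hg
  have hsum : ∑ e, g e = 0 := by
    simpa using congrFun hg (Fin.last r)
  have hvec : ∑ e, g e • p e = 0 := by
    ext m
    simpa using congrFun hg m.castSucc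
  exact fun e => (hgen t ht).eq_zero_of_sum_eq_zero hsum hvec e (Finset.mem_univ e)

variable {G : SimpleGraph (Fin n)} {S : Matrix (Fin n) (Fin n) ℝ}

theorem IsStressMatrix.sum_smul_calA_col (hS : IsStressMatrix G p S) (i : Fin n) :
    ∑ j, S i j • (calA p).col j = 0 := by
  ext m
  simpa [Matrix.mul_apply, Matrix.col_apply, hS.1.apply, mul_comm] using congrFun₂ hS.2.2 m i

theorem IsStressMatrix.sum_row_eq_zero (hS : IsStressMatrix G p S) (i : Fin n) :
    ∑ j, S i j = 0 := by
  simpa using congrFun (hS.sum_smul_calA_col i) (Fin.last r)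

theorem IsStressMatrix.sum_smul_eq_zero (hS : IsStressMatrix G p S) (i : Fin n) :
    ∑ j, S i j • p j = 0 := by
  simpa [dropLastₗ_calA_col] using congrArg (dropLastₗ r) (hS.sum_smul_calA_col i)

theorem IsStressMatrix.norm_sub_eq_of_ne_zero (hS : IsStressMatrix G p S) {s : ℕ}
    {q : Fin n → EuclideanSpace ℝ (Fin s)}
    (hq : ∀ i j, G.Adj i j → dist (q i) (q j) = dist (p i) (p j)) (i j : Fin n)
    (hij : S i j ≠ 0) : ‖q i - q j‖ = ‖p i - p j‖ := by
  rcases eq_or_ne i j with rfl | hne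
  · simp
  · simpa [dist_eq_norm] using hq i j (not_not.mp fun h => hij (hS.2.1 i j hne h))

end Framework

theorem universally_rigid_of_general_position_general {n r : ℕ} (hn : r + 2 ≤ n)
    (G : SimpleGraph (Fin n))
    (p : Fin n → EuclideanSpace ℝ (Fin r))
    (hgen : InGeneralPosition p)
    (S : Matrix (Fin n) (Fin n) ℝ) (hS : IsStressMatrix G p S)
    (hpsd : S.PosSemidef) (hrank : S.rank = n - r - 1) :
    ∀ (s : ℕ) (q : Fin n → EuclideanSpace ℝ (Fin s)),
      (∀ i j, G.Adj i j → dist (q i) (q j) = dist (p i) (p j)) →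
      (∀ i j, dist (q i) (q j) = dist (p i) (p j)) := by
  intro s q hq
  have hu := hgen.inLinearGeneralPosition
  have hd : finrank ℝ (Fin (r + 1) → ℝ) = r + 1 := finrank_fin_fun ℝ
  have hSu := hS.sum_smul_calA_col
  have hker := hu.exists_dual_of_mulVec_eq_zero (by simp [hd]; omega) hSu
    (by simp [hrank, hd, Nat.sub_sub])
  have hedge := hS.norm_sub_eq_of_ne_zero hq
  obtain ⟨L, hL⟩ := exists_linearMap_of_mulVec_coord_eq_zero hker
    (hpsd.mulVec_coord_eq_zero_of_norm_sub_eq hS.sum_row_eq_zero hS.sum_smul_eq_zero hedge)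
  obtain ⟨B, hBsymm, hB⟩ := exists_isSymm_bilinForm_apply_self L (dropLastₗ r)
  have hBcol : ∀ i j, B ((calA p).col i - (calA p).col j) ((calA p).col i - (calA p).col j)
      = ‖q i - q j‖ ^ 2 - ‖p i - p j‖ ^ 2 := fun i j => by
    rw [hB, map_sub, map_sub, hL, hL, dropLastₗ_calA_col, dropLastₗ_calA_col]
  intro i j
  have := hu.bilinForm_apply_sub_eq_zero hBsymm hSu hker
    (hu.exists_row_support (by simp [hd]; omega) hS.1 hSu hker)
    (w := LinearMap.proj (Fin.last r)) (calA_last p)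
    (fun i j hij => by rw [hBcol, hedge i j hij, sub_self]) i j
  rw [hBcol, sub_eq_zero] at this
  rw [dist_eq_norm, dist_eq_norm]
  exact (pow_left_inj₀ (norm_nonneg _) (norm_nonneg _) two_ne_zero).mp this

/-- Main theorem: a framework in general position admitting a positive semidefinite
stress matrix of rank `n - r - 1` is universally rigid. -/
theorem universally_rigid_of_general_position {n r : ℕ} (hn : r + 2 ≤ n)
    (G : SimpleGraph (Fin n)) (G_conn : G.Connected)
    (p : Fin n → EuclideanSpace ℝ (Fin r))
    (hgen : InGeneralPosition p)
    (hspan : affineSpan ℝ (Set.range p) = ⊤)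
    (S : Matrix (Fin n) (Fin n) ℝ) (hS : IsStressMatrix G p S)
    (hpsd : S.PosSemidef) (hrank : S.rank = n - r - 1) :
    ∀ (s : ℕ) (q : Fin n → EuclideanSpace ℝ (Fin s)),
      (∀ i j, G.Adj i j → dist (q i) (q j) = dist (p i) (p j)) →
      (∀ i j, dist (q i) (q j) = dist (p i) (p j)) :=
  universally_rigid_of_general_position_general hn G p hgen S hS hpsd hrank
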